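/- arXiv:2109.09835 — 7 statements merged into one kernel-verified Lean document; each statement's English description precedes it below -/
import Mathlib

section
/- For the Lagrangian L(x,λ) = ‖x − x₀‖² + λᵀh(x) with convex G-Lipschitz constraints h : ℝⁿ → ℝᵐ, the minimizers x*_λ = argmin_x L(x,λ) satisfy ‖x*_{λ₁} − x*_{λ₂}‖ ≤ √m · G · ‖λ₁ − λ₂‖ for all λ₁, λ₂ ≥ 0. -/
/-- The Lagrangian minimizers `xs λ = argmin_x ‖x − x₀‖² + λᵀh(x)` are
`√m·G`-Lipschitz in `λ` over the nonnegative orthant. -/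
theorem lagrangian_minimizer_lipschitz {n m : ℕ} (x₀ : EuclideanSpace ℝ (Fin n)) (G : ℝ)
    (hG : 0 ≤ G)
    (h : Fin m → EuclideanSpace ℝ (Fin n) → ℝ)
    (hconv : ∀ i, ConvexOn ℝ Set.univ (h i))
    (hlip : ∀ i x y, |h i x - h i y| ≤ G * ‖x - y‖)
    (Lag : EuclideanSpace ℝ (Fin n) → EuclideanSpace ℝ (Fin m) → ℝ)
    (hLag : ∀ x l, Lag x l = ‖x - x₀‖ ^ 2 + ∑ i, l i * h i x)
    (xs : EuclideanSpace ℝ (Fin m) → EuclideanSpace ℝ (Fin n))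
    (hxs : ∀ l : EuclideanSpace ℝ (Fin m), (∀ i, 0 ≤ l i) → ∀ x, Lag (xs l) l ≤ Lag x l) :
    ∀ l₁ l₂ : EuclideanSpace ℝ (Fin m), (∀ i, 0 ≤ l₁ i) → (∀ i, 0 ≤ l₂ i) →
      ‖xs l₁ - xs l₂‖ ≤ Real.sqrt m * G * ‖l₁ - l₂‖ := by
  have strong : ∀ l : EuclideanSpace ℝ (Fin m), (∀ i, 0 ≤ l i) →
      ∀ x, Lag (xs l) l + (1/2) * ‖x - xs l‖ ^ 2 ≤ Lag x l := by
    intro l hl x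
    set y : EuclideanSpace ℝ (Fin n) := (1/2 : ℝ) • xs l + (1/2 : ℝ) • x with hy
    have hmin := hxs l hl y
    -- norm part via parallelogram
    have hnorm : ‖y - x₀‖ ^ 2 =
        (‖xs l - x₀‖ ^ 2 + ‖x - x₀‖ ^ 2) / 2 - ‖x - xs l‖ ^ 2 / 4 := by
      have ha : y - x₀ = (1/2 : ℝ) • ((xs l - x₀) + (x - x₀)) := by
        rw [hy]; module
      rw [ha, norm_smul]
      have hpar := parallelogram_law_with_norm ℝ (xs l - x₀) (x - x₀)
      have hd : (xs l - x₀) - (x - x₀) = xs l - x := by abel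
      rw [hd] at hpar
      have hrev : ‖x - xs l‖ = ‖xs l - x‖ := norm_sub_rev _ _
      rw [hrev]
      have h12 : ‖(1/2:ℝ)‖ = 1/2 := by norm_num
      rw [h12]
      nlinarith [hpar]
    -- convex part
    have hconvsum : ∑ i, l i * h i y ≤
        (∑ i, l i * h i (xs l) + ∑ i, l i * h i x) / 2 := by
      rw [← Finset.sum_add_distrib, Finset.sum_div]
      apply Finset.sum_le_sum
      intro i _
      have hc := (hconv i).2 (Set.mem_univ (xs l)) (Set.mem_univ x)
        (by norm_num : (0:ℝ) ≤ 1/2) (by norm_num : (0:ℝ) ≤ 1/2) (by norm_num)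
      have := mul_le_mul_of_nonneg_left hc (hl i)
      simp only [smul_eq_mul] at this ⊢
      nlinarith [this]
    have hLy : Lag y l ≤ (Lag (xs l) l + Lag x l) / 2 - ‖x - xs l‖ ^ 2 / 4 := by
      rw [hLag y l, hLag (xs l) l, hLag x l, hnorm]
      linarith
    rw [hLag (xs l) l, hLag y l] at hmin
    rw [hLag (xs l) l, hLag x l]
    linarith
  intro l₁ l₂ hl₁ hl₂
  have h1 := strong l₁ hl₁ (xs l₂)
  have h2 := strong l₂ hl₂ (xs l₁)
  set A := ‖xs l₁ - xs l₂‖ with hA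
  have hArev : ‖xs l₂ - xs l₁‖ = A := norm_sub_rev _ _
  rw [hLag (xs l₁) l₁, hLag (xs l₂) l₁] at h1
  rw [hLag (xs l₂) l₂, hLag (xs l₁) l₂] at h2
  rw [hArev] at h1
  -- A^2 ≤ ∑ (l₁ i - l₂ i) * (h i (xs l₂) - h i (xs l₁))
  have hsum : A ^ 2 ≤ ∑ i, (l₁ i - l₂ i) * (h i (xs l₂) - h i (xs l₁)) := by
    have : ∑ i, (l₁ i - l₂ i) * (h i (xs l₂) - h i (xs l₁)) =
        (∑ i, l₁ i * h i (xs l₂) - ∑ i, l₁ i * h i (xs l₁)) +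
        (∑ i, l₂ i * h i (xs l₁) - ∑ i, l₂ i * h i (xs l₂)) := by
      rw [← Finset.sum_sub_distrib, ← Finset.sum_sub_distrib, ← Finset.sum_add_distrib]
      apply Finset.sum_congr rfl; intro i _; ring
    rw [this]; linarith
  have hbound : ∑ i, (l₁ i - l₂ i) * (h i (xs l₂) - h i (xs l₁)) ≤
      (∑ i, |l₁ i - l₂ i|) * (G * A) := by
    rw [Finset.sum_mul]
    apply Finset.sum_le_sum
    intro i _
    calc (l₁ i - l₂ i) * (h i (xs l₂) - h i (xs l₁))
        ≤ |(l₁ i - l₂ i) * (h i (xs l₂) - h i (xs l₁))| := le_abs_self _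
      _ = |l₁ i - l₂ i| * |h i (xs l₂) - h i (xs l₁)| := abs_mul _ _
      _ ≤ |l₁ i - l₂ i| * (G * A) := by
          apply mul_le_mul_of_nonneg_left _ (abs_nonneg _)
          rw [← hArev]; exact hlip i (xs l₂) (xs l₁)
  have hl1l2 : (∑ i, |l₁ i - l₂ i|) ≤ Real.sqrt m * ‖l₁ - l₂‖ := by
    have hcs : (∑ i, |l₁ i - l₂ i|) ^ 2 ≤ (m : ℝ) * ∑ i, |l₁ i - l₂ i| ^ 2 := by
      have := sq_sum_le_card_mul_sum_sq (s := Finset.univ) (f := fun i => |l₁ i - l₂ i|)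
      simpa using this
    have hnorm : ‖l₁ - l₂‖ = Real.sqrt (∑ i, |l₁ i - l₂ i| ^ 2) := by
      simp [EuclideanSpace.norm_eq, Real.norm_eq_abs, sq_abs]
    rw [hnorm, ← Real.sqrt_mul (Nat.cast_nonneg m)]
    have h1 : (0:ℝ) ≤ ∑ i, |l₁ i - l₂ i| := Finset.sum_nonneg fun i _ => abs_nonneg _
    nlinarith [Real.sq_sqrt (show (0:ℝ) ≤ (m:ℝ) * ∑ i, |l₁ i - l₂ i| ^ 2 by positivity),
      Real.sqrt_nonneg ((m:ℝ) * ∑ i, |l₁ i - l₂ i| ^ 2)]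
  have hAnn : 0 ≤ A := norm_nonneg _
  rcases eq_or_lt_of_le hAnn with hA0 | hApos
  · rw [← hA0]; positivity
  · have : A ^ 2 ≤ Real.sqrt m * ‖l₁ - l₂‖ * (G * A) := by
      calc A ^ 2 ≤ (∑ i, |l₁ i - l₂ i|) * (G * A) := hsum.trans hbound
        _ ≤ Real.sqrt m * ‖l₁ - l₂‖ * (G * A) := by
            apply mul_le_mul_of_nonneg_right hl1l2 (by positivity)
    nlinarith
end

section
/- The dual function d(λ) = min_{x∈ℝⁿ} [‖x − x₀‖² + λᵀh(x)] with convex G-Lipschitz constraints h satisfies ‖∇d(λ₁) − ∇d(λ₂)‖ ≤ m·G²·‖λ₁ − λ₂‖ for all λ₁, λ₂ ≥ 0, i.e., d is mG²-smooth on the nonnegative orthant. -/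
open scoped RealInnerProductSpace

set_option maxHeartbeats 1000000 in
/-- The dual function `d(λ) = min_x ‖x − x₀‖² + λᵀh(x)` with convex `G`-Lipschitz
constraints is `mG²`-smooth on the nonnegative orthant:
`‖∇d(λ₁) − ∇d(λ₂)‖ ≤ mG²‖λ₁ − λ₂‖`. -/
theorem dual_gradient_smooth {n m : ℕ} (x₀ : EuclideanSpace ℝ (Fin n)) (G : ℝ)
    (hG : 0 ≤ G)
    (h : Fin m → EuclideanSpace ℝ (Fin n) → ℝ)
    (hconv : ∀ i, ConvexOn ℝ Set.univ (h i))
    (hlip : ∀ i x y, |h i x - h i y| ≤ G * ‖x - y‖)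
    (Lag : EuclideanSpace ℝ (Fin n) → EuclideanSpace ℝ (Fin m) → ℝ)
    (hLag : ∀ x l, Lag x l = ‖x - x₀‖ ^ 2 + ∑ i, l i * h i x)
    (xs : EuclideanSpace ℝ (Fin m) → EuclideanSpace ℝ (Fin n))
    (hxs : ∀ l : EuclideanSpace ℝ (Fin m), ∀ x, Lag (xs l) l ≤ Lag x l)
    (d : EuclideanSpace ℝ (Fin m) → ℝ)
    (hd : ∀ l, d l = ⨅ x : EuclideanSpace ℝ (Fin n), Lag x l)
    (gd : EuclideanSpace ℝ (Fin m) → EuclideanSpace ℝ (Fin m))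
    (hgd : ∀ l : EuclideanSpace ℝ (Fin m), (∀ i, 0 ≤ l i) → HasGradientAt d (gd l) l) :
    ∀ l₁ l₂ : EuclideanSpace ℝ (Fin m), (∀ i, 0 ≤ l₁ i) → (∀ i, 0 ≤ l₂ i) →
      ‖gd l₁ - gd l₂‖ ≤ m * G ^ 2 * ‖l₁ - l₂‖ := by
  classical
  -- v l = h(xs l)
  set v : EuclideanSpace ℝ (Fin m) → EuclideanSpace ℝ (Fin m) :=
    fun l => WithLp.toLp 2 (fun i => h i (xs l)) with hv
  have dmin : ∀ l, d l = Lag (xs l) l := by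
    intro l
    rw [hd l]
    refine le_antisymm (ciInf_le ⟨Lag (xs l) l, ?_⟩ (xs l)) (le_ciInf (hxs l))
    rintro y ⟨x, rfl⟩; exact hxs l x
  have dle : ∀ l l' : EuclideanSpace ℝ (Fin m),
      d l' ≤ d l + ∑ i, (l' i - l i) * h i (xs l) := by
    intro l l'
    have h1 : d l' ≤ Lag (xs l) l' := by
      rw [hd l']
      exact ciInf_le ⟨Lag (xs l') l', by rintro y ⟨x, rfl⟩; exact hxs l' x⟩ (xs l)
    have h2 : Lag (xs l) l' = Lag (xs l) l + ∑ i, (l' i - l i) * h i (xs l) := by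
      rw [hLag, hLag]
      have : ∑ i, (l' i - l i) * h i (xs l)
          = ∑ i, l' i * h i (xs l) - ∑ i, l i * h i (xs l) := by
        rw [← Finset.sum_sub_distrib]; exact Finset.sum_congr rfl fun i _ => by ring
      rw [this]; ring
    rw [← dmin l] at h2
    linarith [h1, h2.le]
  -- gradient identification
  have keyg : ∀ l : EuclideanSpace ℝ (Fin m), (∀ i, 0 ≤ l i) → gd l = v l := by
    intro l hl
    have hF := (hgd l hl).hasFDerivAt
    have inner_eq : ∀ u : EuclideanSpace ℝ (Fin m), ⟪gd l, u⟫ = ⟪v l, u⟫ := by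
      intro u
      have hc : HasDerivAt (fun t : ℝ => l + t • u) u 0 := by
        simpa using ((hasDerivAt_id (0:ℝ)).smul_const u).const_add l
      have hF' : HasFDerivAt d ((InnerProductSpace.toDual ℝ (EuclideanSpace ℝ (Fin m)))
          (gd l)) (l + (0:ℝ) • u) := by simpa using hF
      have hder : HasDerivAt (fun t : ℝ => d (l + t • u)) (⟪gd l, u⟫) 0 := by
        simpa [InnerProductSpace.toDual_apply_apply, Function.comp_def] using hF'.comp_hasDerivAt 0 hc
      have hφ : HasDerivAt (fun t : ℝ => d (l + t • u) - t * ⟪v l, u⟫)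
          (⟪gd l, u⟫ - ⟪v l, u⟫) 0 :=
        hder.sub (by simpa using (hasDerivAt_id (0:ℝ)).mul_const (⟪v l, u⟫))
      have hmax : IsLocalMax (fun t : ℝ => d (l + t • u) - t * ⟪v l, u⟫) 0 := by
        apply Filter.Eventually.of_forall
        intro t
        have hdle := dle l (l + t • u)
        have hsum : ∑ i, ((l + t • u) i - l i) * h i (xs l) = t * ⟪v l, u⟫ := by
          simp only [PiLp.add_apply, PiLp.smul_apply, smul_eq_mul, PiLp.inner_apply,
            RCLike.inner_apply, conj_trivial, Finset.mul_sum, hv, PiLp.toLp_apply]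
          exact Finset.sum_congr rfl fun i _ => by ring
        rw [hsum] at hdle
        simp only [zero_smul, add_zero, zero_mul, sub_zero]
        linarith
      have h0 := hmax.hasDerivAt_eq_zero hφ
      linarith
    have hz : gd l - v l = 0 := by
      have h0 : ⟪gd l - v l, gd l - v l⟫ = 0 := by
        rw [inner_sub_left]
        have := inner_eq (gd l - v l); linarith
      exact inner_self_eq_zero.mp h0
    exact sub_eq_zero.mp hz
  -- strong convexity of the Lagrangian at its minimizer
  have strong : ∀ l : EuclideanSpace ℝ (Fin m), (∀ i, 0 ≤ l i) →
      ∀ x, ‖x - xs l‖ ^ 2 / 2 ≤ Lag x l - Lag (xs l) l := by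
    intro l hl x
    set z : EuclideanSpace ℝ (Fin n) := (1/2 : ℝ) • xs l + (1/2 : ℝ) • x with hz
    have hmin := hxs l z
    have hconvz : ∑ i, l i * h i z ≤
        (∑ i, l i * h i (xs l)) / 2 + (∑ i, l i * h i x) / 2 := by
      have : ∀ i ∈ Finset.univ, l i * h i z ≤
          l i * ((1/2 : ℝ) * h i (xs l) + (1/2 : ℝ) * h i x) := by
        intro i _
        exact mul_le_mul_of_nonneg_left
          ((hconv i).2 (Set.mem_univ _) (Set.mem_univ _) (by norm_num) (by norm_num)
            (by norm_num)) (hl i)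
      calc ∑ i, l i * h i z ≤ ∑ i, l i * ((1/2 : ℝ) * h i (xs l) + (1/2 : ℝ) * h i x) :=
            Finset.sum_le_sum this
        _ = (∑ i, l i * h i (xs l)) / 2 + (∑ i, l i * h i x) / 2 := by
            rw [Finset.sum_div, Finset.sum_div, ← Finset.sum_add_distrib]
            exact Finset.sum_congr rfl fun i _ => by ring
    have hnorm : ‖z - x₀‖ ^ 2 =
        ‖xs l - x₀‖ ^ 2 / 2 + ‖x - x₀‖ ^ 2 / 2 - ‖x - xs l‖ ^ 2 / 4 := by
      have hzx : z - x₀ = (1/2 : ℝ) • ((xs l - x₀) + (x - x₀)) := by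
        rw [hz]; module
      have hpar := parallelogram_law_with_norm ℝ (xs l - x₀) (x - x₀)
      have hsub : xs l - x₀ - (x - x₀) = xs l - x := by abel
      rw [hsub] at hpar
      have h1 : ‖z - x₀‖ ^ 2 = ‖(xs l - x₀) + (x - x₀)‖ ^ 2 / 4 := by
        rw [hzx, norm_smul]
        simp [mul_pow]; ring
      have h2 : ‖x - xs l‖ = ‖xs l - x‖ := norm_sub_rev _ _
      have hpar2 : ‖xs l - x₀ + (x - x₀)‖ ^ 2 + ‖xs l - x‖ ^ 2 =
          2 * (‖xs l - x₀‖ ^ 2 + ‖x - x₀‖ ^ 2) := by simpa [pow_two] using hpar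
      rw [h1, h2]; linarith [hpar2]
    have hLz := hLag z l
    have hL1 := hLag (xs l) l
    have hL2 := hLag x l
    nlinarith [hmin, hconvz, hnorm]
  -- main argument
  intro l₁ l₂ hl₁ hl₂
  set x₁ := xs l₁
  set x₂ := xs l₂
  set u : EuclideanSpace ℝ (Fin m) := WithLp.toLp 2 (fun i => h i x₂ - h i x₁) with hu
  have hgdu : gd l₁ - gd l₂ = -u := by
    rw [keyg l₁ hl₁, keyg l₂ hl₂]
    ext i
    simp [hv, hu, x₁, x₂]
  have hnormu : ‖gd l₁ - gd l₂‖ = ‖u‖ := by rw [hgdu, norm_neg]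
  set D := ‖x₁ - x₂‖ with hD
  have hD0 : 0 ≤ D := norm_nonneg _
  -- D² ≤ S = ⟪l₁ - l₂, u⟫
  have hS : D ^ 2 ≤ ⟪l₁ - l₂, u⟫ := by
    have s1 := strong l₁ hl₁ x₂
    have s2 := strong l₂ hl₂ x₁
    have e1 : ‖x₂ - x₁‖ = D := norm_sub_rev x₂ x₁
    have e2 : ‖x₁ - x₂‖ = D := rfl
    rw [e1] at s1
    rw [e2] at s2
    have hinner : ⟪l₁ - l₂, u⟫ = ∑ i, (l₁ i - l₂ i) * (h i x₂ - h i x₁) := by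
      simp only [PiLp.inner_apply, RCLike.inner_apply, conj_trivial, PiLp.sub_apply, hu, PiLp.toLp_apply]
      exact Finset.sum_congr rfl fun i _ => mul_comm _ _
    have hsum : Lag x₂ l₁ - Lag x₁ l₁ + (Lag x₁ l₂ - Lag x₂ l₂)
        = ∑ i, (l₁ i - l₂ i) * (h i x₂ - h i x₁) := by
      rw [hLag, hLag, hLag, hLag]
      have e : ∑ i, (l₁ i - l₂ i) * (h i x₂ - h i x₁)
          = ∑ i, l₁ i * h i x₂ - ∑ i, l₁ i * h i x₁
            + (∑ i, l₂ i * h i x₁ - ∑ i, l₂ i * h i x₂) := by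
        rw [← Finset.sum_sub_distrib, ← Finset.sum_sub_distrib, ← Finset.sum_add_distrib]
        exact Finset.sum_congr rfl fun i _ => by ring
      rw [e]; ring
    rw [hinner, ← hsum]
    linarith
  have hCS : ⟪l₁ - l₂, u⟫ ≤ ‖l₁ - l₂‖ * ‖u‖ := real_inner_le_norm _ _
  have hu2 : ‖u‖ ^ 2 ≤ (m : ℝ) * G ^ 2 * D ^ 2 := by
    have : ‖u‖ ^ 2 = ∑ i, (u i) ^ 2 := by
      rw [EuclideanSpace.norm_eq, Real.sq_sqrt (by positivity)]
      simp [Real.norm_eq_abs, sq_abs]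
    rw [this]
    have hbound : ∀ i ∈ Finset.univ, (u i) ^ 2 ≤ G ^ 2 * D ^ 2 := by
      intro i _
      have := hlip i x₂ x₁
      have e1 : ‖x₂ - x₁‖ = D := norm_sub_rev x₂ x₁
      rw [e1] at this
      have habs : |u i| ≤ G * D := by simpa [hu] using this
      nlinarith [abs_nonneg (u i), sq_abs (u i)]
    calc ∑ i, (u i) ^ 2 ≤ ∑ _i : Fin m, G ^ 2 * D ^ 2 := Finset.sum_le_sum hbound
      _ = (m : ℝ) * G ^ 2 * D ^ 2 := by simp [Finset.sum_const]; ring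
  rw [hnormu]
  rcases eq_or_lt_of_le (norm_nonneg u) with h0 | h0
  · rw [← h0]; positivity
  · have hmG : (0:ℝ) ≤ (m : ℝ) * G ^ 2 := by positivity
    have key : ‖u‖ ^ 2 ≤ (m : ℝ) * G ^ 2 * ‖l₁ - l₂‖ * ‖u‖ := by
      nlinarith [hS, hCS, hu2, norm_nonneg (l₁ - l₂), norm_nonneg u]
    nlinarith [key, h0]
end

section
/- Consider a cutting plane method with θ-rate (Vol(M_t)/Vol(M_1) ≤ e^{−θt}) applied to maximize a concave function d over a compact convex set D ⊆ [λ₁ − R/2, λ₁ + R/2]ᵐ, using a gradient oracle with accuracy ε_g ≤ ε/(R√m) and a value oracle with accuracy ε_v ≤ ε. If the set of ε-optimal solutions D_ε contains an ℓ∞-ball of diameter r(ε) > 0, then after T = O((m/θ)·log(R/r(ε))) rounds the method outputs λ̄ ∈ D with max_{λ∈D} d(λ) − d(λ̄) ≤ 4ε. -/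
open scoped RealInnerProductSpace
open Set

lemma cube_volume {m : ℕ} (a : EuclideanSpace ℝ (Fin m)) {s : ℝ} (hs : 0 ≤ s) :
    MeasureTheory.volume {l : EuclideanSpace ℝ (Fin m) | ∀ i, |l i - a i| ≤ s}
      = ENNReal.ofReal ((2*s)^m) := by
  have hmp := EuclideanSpace.volume_preserving_symm_measurableEquiv_toLp (Fin m)
  have hset : {l : EuclideanSpace ℝ (Fin m) | ∀ i, |l i - a i| ≤ s}
      = (MeasurableEquiv.toLp 2 (Fin m → ℝ)).symm ⁻¹'
        (Set.pi Set.univ fun i => Icc (a i - s) (a i + s)) := by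
    ext l
    simp only [Set.mem_setOf_eq, Set.mem_preimage, Set.mem_pi, Set.mem_univ, forall_true_left,
      Set.mem_Icc]
    have hco : ∀ i, (MeasurableEquiv.toLp 2 (Fin m → ℝ)).symm l i = l i := fun i => rfl
    constructor
    · intro h i
      rw [hco i]
      have := abs_le.1 (h i)
      constructor <;> linarith [this.1, this.2]
    · intro h i
      have := h i
      rw [hco i] at this
      rw [abs_le]
      constructor <;> linarith [this.1, this.2]
  rw [hset, hmp.measure_preimage
    (MeasurableSet.univ_pi (fun i => measurableSet_Icc)).nullMeasurableSet,
    MeasureTheory.volume_pi_pi]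
  have : ∀ i : Fin m, MeasureTheory.volume (Icc (a i - s) (a i + s)) = ENNReal.ofReal (2*s) := by
    intro i; rw [Real.volume_Icc]; congr 1; ring
  rw [Finset.prod_congr rfl (fun i _ => this i), Finset.prod_const, Finset.card_univ,
    Fintype.card_fin, ← ENNReal.ofReal_pow (by linarith)]

lemma concave_grad_le {m : ℕ} {D : Set (EuclideanSpace ℝ (Fin m))}
    {d : EuclideanSpace ℝ (Fin m) → ℝ} (hconc : ConcaveOn ℝ D d)
    {x y g : EuclideanSpace ℝ (Fin m)} (hx : x ∈ D) (hy : y ∈ D)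
    (hg : HasGradientAt d g x) : d y ≤ d x + ⟪g, y - x⟫ := by
  set v := y - x with hv
  set φ : ℝ → ℝ := fun t => d (x + t • v) with hφ
  have hL : ∀ t ∈ Icc (0:ℝ) 1, x + t • v ∈ D := by
    intro t ht
    have h1 := hconc.1 hx hy (by linarith [ht.2] : (0:ℝ) ≤ 1 - t) ht.1 (by ring)
    have h2 : (1 - t) • x + t • y = x + t • v := by
      simp only [hv, smul_sub, sub_smul, one_smul]; abel
    rwa [h2] at h1
  have hφc : ConcaveOn ℝ (Icc (0:ℝ) 1) φ := by
    refine ⟨convex_Icc 0 1, ?_⟩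
    intro t1 ht1 t2 ht2 p q hp hq hpq
    have h1 := hconc.2 (hL t1 ht1) (hL t2 ht2) hp hq hpq
    have h2 : p • (x + t1 • v) + q • (x + t2 • v) = (p + q) • x + (p • t1 + q • t2) • v := by
      simp only [smul_eq_mul]; module
    rw [h2, hpq, one_smul] at h1
    simpa [hφ] using h1
  have hvd : HasDerivAt (fun t : ℝ => x + t • v) v (0:ℝ) := by
    simpa using ((hasDerivAt_id (0:ℝ)).smul_const v).const_add x
  have hφ' : HasDerivAt φ ⟪g, v⟫ 0 := by
    have hf : HasFDerivAt d (InnerProductSpace.toDual ℝ _ g) x := hg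
    have hf0 : HasFDerivAt d (InnerProductSpace.toDual ℝ _ g) ((fun t : ℝ => x + t • v) 0) := by
      simpa using hf
    have := hf0.comp_hasDerivAt (0:ℝ) hvd
    simp only [InnerProductSpace.toDual_apply_apply] at this
    exact this
  have hsl := hφc.slope_le_of_hasDerivAt (left_mem_Icc.2 zero_le_one)
    (right_mem_Icc.2 zero_le_one) zero_lt_one hφ'
  rw [slope_def_field] at hsl
  have h0 : φ 0 = d x := by simp [hφ]
  have h1 : φ 1 = d y := by simp [hφ, hv]
  rw [h0, h1] at hsl
  rw [sub_zero, div_one] at hsl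
  linarith
/-- Convergence of a `θ`-rate cutting plane method with `(ε_g, ε_v)`-approximate gradient
and value oracles: if the `ε`-optimal set contains an `ℓ∞`-ball of diameter `r` and
`T > (m/θ)·log(R/r)`, the output `λ̄` satisfies `max_D d − d(λ̄) ≤ 4ε`. -/
theorem cutting_plane_approximate_oracles {m : ℕ} (hm : 1 ≤ m)
    (θ R r ε εg εv : ℝ)
    (hθ : 0 < θ) (hR : 0 < R) (hr : 0 < r) (hε : 0 < ε)
    (D : Set (EuclideanSpace ℝ (Fin m))) (hDcomp : IsCompact D) (hDconv : Convex ℝ D)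
    (lam1 : EuclideanSpace ℝ (Fin m)) (hlam1D : lam1 ∈ D)
    (hDball : ∀ l ∈ D, ∀ i, |l i - lam1 i| ≤ R / 2)
    (d : EuclideanSpace ℝ (Fin m) → ℝ) (hconc : ConcaveOn ℝ D d)
    (gd : EuclideanSpace ℝ (Fin m) → EuclideanSpace ℝ (Fin m))
    (hgd : ∀ l ∈ D, HasGradientAt d (gd l) l)
    (Og : EuclideanSpace ℝ (Fin m) → EuclideanSpace ℝ (Fin m))
    (Ov : EuclideanSpace ℝ (Fin m) → ℝ)
    (hOg : ∀ l ∈ D, ‖gd l - Og l‖ ≤ εg)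
    (hOv : ∀ l ∈ D, |d l - Ov l| ≤ εv)
    (hεg : εg ≤ ε / (R * Real.sqrt m)) (hεv : εv ≤ ε)
    (lams : EuclideanSpace ℝ (Fin m)) (hlams : lams ∈ D)
    (hmax : ∀ l ∈ D, d l ≤ d lams)
    -- the ε-optimal set contains an ℓ∞-ball of diameter r
    (c : EuclideanSpace ℝ (Fin m))
    (hball : ∀ l : EuclideanSpace ℝ (Fin m),
      (∀ i, |l i - c i| ≤ r / 2) → l ∈ D ∧ d lams - d l ≤ ε)
    (T : ℕ) (hT : ((m : ℝ) / θ) * Real.log (R / r) < T)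
    -- the iterates, cut directions and localizer sets of the cutting plane method
    (lam : ℕ → EuclideanSpace ℝ (Fin m)) (w : ℕ → EuclideanSpace ℝ (Fin m))
    (M : ℕ → Set (EuclideanSpace ℝ (Fin m)))
    (hstart : lam 1 = lam1) (hM1 : M 1 = {l | ∀ i, |l i - lam1 i| ≤ R / 2})
    (hw : ∀ t ∈ Finset.Icc 1 T,
      (lam t ∈ D → w t = -Og (lam t)) ∧
      (lam t ∉ D → ∀ l ∈ D, ⟪w t, l - lam t⟫ ≤ 0))
    (hcut : ∀ t ∈ Finset.Icc 1 T,
      {l ∈ M t | ⟪w t, l - lam t⟫ ≤ 0} ⊆ M (t + 1) ∧ lam (t + 1) ∈ M (t + 1))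
    (hvol : ∀ t ∈ Finset.Icc 1 T,
      MeasureTheory.volume (M t)
        ≤ ENNReal.ofReal (Real.exp (-θ * t)) * MeasureTheory.volume (M 1))
    -- the output: the queried point in D with the best value-oracle output
    (lamb : EuclideanSpace ℝ (Fin m))
    (hlamb : ∃ t ∈ Finset.Icc 1 T, lamb = lam t ∧ lamb ∈ D)
    (hlambmax : ∀ t ∈ Finset.Icc 1 T, lam t ∈ D → Ov (lam t) ≤ Ov lamb) :
    d lams - d lamb ≤ 4 * ε := by
  classical
  obtain ⟨t0, ht0, hlamb_eq, hlambD⟩ := hlamb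
  have hT1 : 1 ≤ T := le_trans (Finset.mem_Icc.1 ht0).1 (Finset.mem_Icc.1 ht0).2
  set B : Set (EuclideanSpace ℝ (Fin m)) := {l | ∀ i, |l i - c i| ≤ r/2} with hB
  have hBD : ∀ l ∈ B, l ∈ D := fun l hl => (hball l hl).1
  have hBM1 : B ⊆ M 1 := by
    intro l hl; rw [hM1]; exact fun i => hDball l (hBD l hl) i
  have hm1 : (1:ℝ) ≤ (m:ℝ) := by exact_mod_cast hm
  have hsqm : 0 < Real.sqrt m := Real.sqrt_pos.2 (by linarith)
  have hRm : 0 < R * Real.sqrt m := mul_pos hR hsqm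
  -- volume facts
  have hvolM1 : MeasureTheory.volume (M 1) = ENNReal.ofReal (R^m) := by
    have h := cube_volume lam1 (s := R/2) (by linarith)
    rw [show 2*(R/2) = R from by ring] at h
    rw [hM1]; exact h
  have hvolB : MeasureTheory.volume B = ENNReal.ofReal (r^m) := by
    have h := cube_volume c (s := r/2) (by linarith)
    rw [show 2*(r/2) = r from by ring] at h
    rw [hB]; exact h
  -- the key volume inequality
  have hexp : Real.exp (-θ*T) * R^m < r^m := by
    have h1 : (m:ℝ) * Real.log (R/r) < θ * T := by
      have h := hT
      rw [div_mul_eq_mul_div, div_lt_iff₀ hθ] at h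
      calc (m:ℝ) * Real.log (R/r) < T * θ := h
        _ = θ * T := mul_comm _ _
    have h2 : Real.exp (-θ*T) < Real.exp (-((m:ℝ) * Real.log (R/r))) :=
      Real.exp_lt_exp.2 (by linarith)
    have h3 : Real.exp (-((m:ℝ) * Real.log (R/r))) = (r/R)^m := by
      have hlog : Real.log ((r/R)^m) = -((m:ℝ) * Real.log (R/r)) := by
        rw [Real.log_pow, show r/R = (R/r)⁻¹ from by rw [inv_div], Real.log_inv]
        ring
      rw [← hlog, Real.exp_log (by positivity)]
    have h4 : (r/R)^m * R^m = r^m := by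
      rw [div_pow]; field_simp
    calc Real.exp (-θ*T) * R^m < (r/R)^m * R^m := by
          rw [← h3]; exact mul_lt_mul_of_pos_right h2 (by positivity)
      _ = r^m := h4
  have hTmem : T ∈ Finset.Icc 1 T := Finset.mem_Icc.2 ⟨hT1, le_rfl⟩
  have hnotsub : ¬ B ⊆ M T := by
    intro hsub
    have h1 : MeasureTheory.volume B ≤ MeasureTheory.volume (M T) :=
      MeasureTheory.measure_mono hsub
    have h2 := hvol T hTmem
    rw [hvolB] at h1; rw [hvolM1] at h2
    have h5 : ENNReal.ofReal (r^m) ≤ ENNReal.ofReal (Real.exp (-θ*T) * R^m) := by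
      rw [ENNReal.ofReal_mul (Real.exp_nonneg _)]; exact h1.trans h2
    have h6 : r^m ≤ Real.exp (-θ*T) * R^m :=
      (ENNReal.ofReal_le_ofReal_iff (by positivity)).1 h5
    linarith
  obtain ⟨l, hlB, hlnot⟩ := Set.not_subset.1 hnotsub
  have hlD : l ∈ D := hBD l hlB
  -- find the time at which l is cut
  have hstep : ∃ t, 1 ≤ t ∧ t < T ∧ l ∈ M t ∧ l ∉ M (t+1) := by
    by_contra hcon
    push_neg at hcon
    have hall : ∀ t, 1 ≤ t → t ≤ T → l ∈ M t := by
      intro t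
      induction t with
      | zero => intro h; omega
      | succ n ih =>
        intro h1 h2
        rcases Nat.lt_or_ge n 1 with hle | hge
        · have : n + 1 = 1 := by omega
          rw [this]; exact hBM1 hlB
        · exact hcon n hge (by omega) (ih hge (by omega))
    exact hlnot (hall T hT1 le_rfl)
  obtain ⟨t, ht1, htT, hlMt, hlMt1⟩ := hstep
  have htmem : t ∈ Finset.Icc 1 T := Finset.mem_Icc.2 ⟨ht1, le_of_lt htT⟩
  have hcutpos : 0 < ⟪w t, l - lam t⟫ := by
    by_contra hle
    push_neg at hle
    exact hlMt1 ((hcut t htmem).1 ⟨hlMt, hle⟩)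
  have hlamtD : lam t ∈ D := by
    by_contra hnot
    exact absurd ((hw t htmem).2 hnot l hlD) (not_le.2 hcutpos)
  have hwt : w t = -Og (lam t) := (hw t htmem).1 hlamtD
  have hOgneg : ⟪Og (lam t), l - lam t⟫ < 0 := by
    have h := hcutpos
    rw [hwt, inner_neg_left] at h
    linarith
  -- distance bound
  have hnorm : ‖l - lam t‖ ≤ R * Real.sqrt m := by
    have hcoord : ∀ i, |l i - lam t i| ≤ R := by
      intro i
      have h1 := hDball l hlD i
      have h2 := hDball (lam t) hlamtD i
      calc |l i - lam t i| = |(l i - lam1 i) - (lam t i - lam1 i)| := by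
            rw [show l i - lam t i = (l i - lam1 i) - (lam t i - lam1 i) from by ring]
        _ ≤ |l i - lam1 i| + |lam t i - lam1 i| := abs_sub _ _
        _ ≤ R/2 + R/2 := add_le_add h1 h2
        _ = R := by ring
    rw [EuclideanSpace.norm_eq]
    calc Real.sqrt (∑ i, ‖(l - lam t) i‖^2) ≤ Real.sqrt (∑ _i : Fin m, R^2) := by
          apply Real.sqrt_le_sqrt
          apply Finset.sum_le_sum
          intro i _
          have heq : (l - lam t) i = l i - lam t i := rfl
          rw [heq, Real.norm_eq_abs]
          nlinarith [hcoord i, abs_nonneg (l i - lam t i)]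
      _ = Real.sqrt ((m:ℝ) * R^2) := by
          rw [Finset.sum_const, Finset.card_univ, Fintype.card_fin, nsmul_eq_mul]
      _ = Real.sqrt m * R := by
          rw [Real.sqrt_mul (Nat.cast_nonneg m), Real.sqrt_sq hR.le]
      _ = R * Real.sqrt m := mul_comm _ _
  have hεg0 : 0 ≤ εg := le_trans (norm_nonneg _) (hOg lam1 hlam1D)
  have hinner2 : ⟪gd (lam t) - Og (lam t), l - lam t⟫ ≤ ε := by
    calc ⟪gd (lam t) - Og (lam t), l - lam t⟫
        ≤ ‖gd (lam t) - Og (lam t)‖ * ‖l - lam t‖ := real_inner_le_norm _ _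
      _ ≤ εg * (R * Real.sqrt m) :=
          mul_le_mul (hOg _ hlamtD) hnorm (norm_nonneg _) hεg0
      _ ≤ (ε / (R * Real.sqrt m)) * (R * Real.sqrt m) :=
          mul_le_mul_of_nonneg_right hεg hRm.le
      _ = ε := div_mul_cancel₀ _ (ne_of_gt hRm)
  have hgrad : d l ≤ d (lam t) + ⟪gd (lam t), l - lam t⟫ :=
    concave_grad_le hconc hlamtD hlD (hgd (lam t) hlamtD)
  have hsplit : ⟪gd (lam t), l - lam t⟫
      = ⟪Og (lam t), l - lam t⟫ + ⟪gd (lam t) - Og (lam t), l - lam t⟫ := by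
    rw [inner_sub_left]; ring
  have hdl : d l ≤ d (lam t) + ε := by
    rw [hsplit] at hgrad; linarith
  have hεl : d lams - d l ≤ ε := (hball l hlB).2
  -- value oracle chain
  have ha := abs_le.1 (hOv _ hlamtD)
  have hb := abs_le.1 (hOv _ hlambD)
  have h3 : Ov (lam t) ≤ Ov lamb := hlambmax t htmem hlamtD
  linarith [ha.1, ha.2, hb.1, hb.2]
end

section
/- In the cutting plane scheme with approximate oracles, if at some active step t (λ_t ∈ D) there exists an ε-optimal point λ_ε ∈ D_ε with g_tᵀ(λ_t − λ_ε) ≥ 0, where ‖g_t − ∇d(λ_t)‖ ≤ ε/(R√m), then d(λ_t) ≥ max_{λ∈D} d(λ) − 2ε. -/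
open scoped RealInnerProductSpace

lemma concave_grad_ineq {E : Type*} [NormedAddCommGroup E] [InnerProductSpace ℝ E] [CompleteSpace E]
    {D : Set E} (hD : Convex ℝ D) {d : E → ℝ} (hconc : ConcaveOn ℝ D d)
    {x : E} (hx : x ∈ D) {g : E} (hg : HasGradientAt d g x)
    {y : E} (hy : y ∈ D) : d y - d x ≤ ⟪g, y - x⟫ := by
  set φ : ℝ → ℝ := fun s => d (x + s • (y - x)) with hφ
  have hline : ∀ s : ℝ, x + s • (y - x) = (1 - s) • x + s • y := by
    intro s; simp [smul_sub, sub_smul]; abel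
  have hd : HasDerivAt φ ⟪g, y - x⟫ 0 := by
    have h1 : HasDerivAt (fun s : ℝ => x + s • (y - x)) (y - x) 0 := by
      simpa using ((hasDerivAt_id (0:ℝ)).smul_const (y - x)).const_add x
    have h2 : HasFDerivAt d (InnerProductSpace.toDual ℝ E g) (x + (0:ℝ) • (y - x)) := by
      simpa using hg.hasFDerivAt
    exact (by simpa [real_inner_comm] using h2.comp_hasDerivAt 0 h1 : HasDerivAt (d ∘ fun s : ℝ => x + s • (y - x)) ⟪g, y - x⟫ 0)
  have htend : Filter.Tendsto (slope φ 0) (nhdsWithin 0 (Set.Ioi 0)) (nhds ⟪g, y - x⟫) :=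
    (hasDerivWithinAt_iff_tendsto_slope' Set.notMem_Ioi_self).mp (hd.hasDerivWithinAt)
  refine ge_of_tendsto htend ?_
  filter_upwards [Ioo_mem_nhdsGT_of_mem (by norm_num : (0:ℝ) ∈ Set.Ico 0 1)] with s hs
  have hs0 : 0 < s := hs.1
  have hs1 : s < 1 := hs.2
  have hc := hconc.2 hx hy (by linarith : (0:ℝ) ≤ 1 - s) hs0.le (by ring)
  rw [slope_def_field]
  have hφs : (1 - s) * d x + s * d y ≤ φ s := by
    rw [hφ]; simpa [hline s, smul_eq_mul] using hc
  have hφ0 : φ 0 = d x := by simp [hφ]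
  rw [le_div_iff₀ (by linarith : (0:ℝ) < s - 0)]
  nlinarith [hφs]


/-- If at an active step `λ_t ∈ D` there is an `ε`-optimal `λ_ε` with
`g_tᵀ(λ_t − λ_ε) ≥ 0` where `‖g_t − ∇d(λ_t)‖ ≤ ε/(R√m)`, then
`d(λ_t) ≥ max_D d − 2ε`. -/
theorem cutting_plane_case_one {m : ℕ} (hm : 1 ≤ m) (R ε : ℝ) (hR : 0 < R) (hε : 0 ≤ ε)
    (D : Set (EuclideanSpace ℝ (Fin m))) (hDconv : Convex ℝ D) (hDcomp : IsCompact D)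
    (hdiam : ∀ a ∈ D, ∀ b ∈ D, ‖a - b‖ ≤ R * Real.sqrt m)
    (d : EuclideanSpace ℝ (Fin m) → ℝ) (hconc : ConcaveOn ℝ D d)
    (gd : EuclideanSpace ℝ (Fin m) → EuclideanSpace ℝ (Fin m))
    (hgd : ∀ l ∈ D, HasGradientAt d (gd l) l)
    (lams : EuclideanSpace ℝ (Fin m)) (hlams : lams ∈ D)
    (hmax : ∀ l ∈ D, d l ≤ d lams)
    (lameps : EuclideanSpace ℝ (Fin m)) (hlameps : lameps ∈ D)
    (hepsopt : d lams - ε ≤ d lameps)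
    (lamt : EuclideanSpace ℝ (Fin m)) (hlamt : lamt ∈ D)
    (gt : EuclideanSpace ℝ (Fin m))
    (hgt : ‖gt - gd lamt‖ ≤ ε / (R * Real.sqrt m))
    (hsep : 0 ≤ ⟪gt, lamt - lameps⟫) :
    d lams - 2 * ε ≤ d lamt := by
  have hRm : 0 < R * Real.sqrt m := by
    have : (0:ℝ) < Real.sqrt m := Real.sqrt_pos.mpr (by exact_mod_cast hm)
    positivity
  have hgrad := concave_grad_ineq hDconv hconc hlamt (hgd lamt hlamt) hlameps
  have hsplit : ⟪gd lamt, lameps - lamt⟫ =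
      ⟪gd lamt - gt, lameps - lamt⟫ + ⟪gt, lameps - lamt⟫ := by
    rw [← inner_add_left, sub_add_cancel]
  have h1 : ⟪gd lamt - gt, lameps - lamt⟫ ≤ ε := by
    calc ⟪gd lamt - gt, lameps - lamt⟫ ≤ ‖gd lamt - gt‖ * ‖lameps - lamt‖ :=
          real_inner_le_norm _ _
      _ ≤ (ε / (R * Real.sqrt m)) * (R * Real.sqrt m) := by
          apply mul_le_mul _ (hdiam _ hlameps _ hlamt) (norm_nonneg _)
            (by positivity)
          rwa [norm_sub_rev]
      _ = ε := by field_simp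
  have h2 : ⟪gt, lameps - lamt⟫ ≤ 0 := by
    have : ⟪gt, lamt - lameps⟫ = - ⟪gt, lameps - lamt⟫ := by
      rw [← inner_neg_right]; congr 1; abel
    linarith [hsep, this ▸ hsep]
  linarith [hgrad, hsplit ▸ hgrad]
end

section
/- For the projection onto a single convex constraint h with min_{x: h(x)=0} ‖∇h(x)‖ ≥ Q and min_{x: h(x)≤0} ‖x − x₀‖ ≤ B, the optimal Lagrange multiplier λ* of the dual problem satisfies 0 ≤ λ* ≤ 2B/Q. -/
/-- For projection onto a single convex constraint `h` with
`‖∇h‖ ≥ Q` on the boundary and distance to the feasible set at most `B`,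
the optimal Lagrange multiplier satisfies `0 ≤ λ* ≤ 2B/Q`. -/
theorem single_constraint_multiplier_bound {n : ℕ}
    (h : EuclideanSpace ℝ (Fin n) → ℝ) (hconv : ConvexOn ℝ Set.univ h)
    (gh : EuclideanSpace ℝ (Fin n) → EuclideanSpace ℝ (Fin n))
    (hdiff : ∀ x, HasGradientAt h (gh x) x)
    (x₀ xstar : EuclideanSpace ℝ (Fin n)) (lams Q B : ℝ)
    (hQ : 0 < Q) (hQbd : ∀ x, h x = 0 → Q ≤ ‖gh x‖)
    (hfeas : h xstar ≤ 0)
    (hprimalopt : ∀ x, h x ≤ 0 → ‖xstar - x₀‖ ^ 2 ≤ ‖x - x₀‖ ^ 2)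
    (hB : ‖xstar - x₀‖ ≤ B)
    (hlam_nonneg : 0 ≤ lams)
    (hstat : (2 : ℝ) • (xstar - x₀) + lams • gh xstar = 0)
    (hcs : lams * h xstar = 0) :
    0 ≤ lams ∧ lams ≤ 2 * B / Q := by
  refine ⟨hlam_nonneg, ?_⟩
  have hB0 : 0 ≤ B := le_trans (norm_nonneg _) hB
  rcases eq_or_lt_of_le hlam_nonneg with h0 | hpos
  · rw [← h0]
    positivity
  · have hz : h xstar = 0 := by
      have := hcs
      rcases mul_eq_zero.mp hcs with h' | h'
      · exact absurd h'.symm (ne_of_lt hpos)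
      · exact h'
    have hQg : Q ≤ ‖gh xstar‖ := hQbd xstar hz
    have heq : lams • gh xstar = -((2:ℝ) • (xstar - x₀)) := by
      have := hstat
      linear_combination (norm := module) hstat
    have hnorm : lams * ‖gh xstar‖ = 2 * ‖xstar - x₀‖ := by
      have := congrArg norm heq
      rwa [norm_neg, norm_smul, norm_smul, Real.norm_eq_abs, Real.norm_eq_abs,
        abs_of_nonneg hlam_nonneg, abs_of_nonneg (by norm_num : (0:ℝ) ≤ 2)] at this
    have h1 : lams * Q ≤ 2 * B := by
      calc lams * Q ≤ lams * ‖gh xstar‖ := by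
            exact mul_le_mul_of_nonneg_left hQg hlam_nonneg
        _ = 2 * ‖xstar - x₀‖ := hnorm
        _ ≤ 2 * B := by linarith
    rw [div_eq_mul_inv]
    calc lams = lams * Q * Q⁻¹ := by field_simp
      _ ≤ 2 * B * Q⁻¹ := by
          exact mul_le_mul_of_nonneg_right h1 (by positivity)
end

section
/- For the projection problem with quadratic constraints h_i(x) = xᵀA_ix − c_i ≤ 0 where A_i are positive semidefinite and c_i > 0, each optimal Lagrange multiplier satisfies λ*⁽ⁱ⁾ ≤ (1/c_i)·(x₀ − x*)ᵀx*, and hence λ*⁽ⁱ⁾ ≤ B·X*/c_i where B ≥ ‖x₀ − x*‖ and X* ≥ ‖x*‖. -/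
open scoped RealInnerProductSpace

/-- For the projection problem with PSD quadratic constraints `xᵀAᵢx ≤ cᵢ` (cᵢ > 0),
each optimal Lagrange multiplier satisfies `λᵢ* ≤ (1/cᵢ)·(x₀ − x*)ᵀx* ≤ B·X*/cᵢ`. -/
theorem quadratic_constraints_multiplier_bound {n m : ℕ}
    (A : Fin m → Matrix (Fin n) (Fin n) ℝ) (hA : ∀ i, (A i).PosSemidef)
    (c : Fin m → ℝ) (hc : ∀ i, 0 < c i)
    (x₀ xs : EuclideanSpace ℝ (Fin n)) (lam : Fin m → ℝ) (hlam : ∀ i, 0 ≤ lam i)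
    (hstat : ∑ i, lam i • (Matrix.toEuclideanLin (A i)) xs = x₀ - xs)
    (hcs : ∀ i, lam i * (⟪xs, (Matrix.toEuclideanLin (A i)) xs⟫ - c i) = 0)
    (hfeas : ∀ i, ⟪xs, (Matrix.toEuclideanLin (A i)) xs⟫ ≤ c i)
    (B Xs : ℝ) (hB : ‖x₀ - xs‖ ≤ B) (hX : ‖xs‖ ≤ Xs) :
    ∀ i, lam i ≤ (1 / c i) * ⟪x₀ - xs, xs⟫ ∧ lam i ≤ B * Xs / c i := by
  have key : ⟪x₀ - xs, xs⟫ = ∑ j, lam j * c j := by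
    rw [← hstat, sum_inner]
    refine Finset.sum_congr rfl fun j _ => ?_
    rw [real_inner_smul_left, real_inner_comm]
    have := hcs j
    nlinarith [hcs j]
  intro i
  have h1 : lam i * c i ≤ ⟪x₀ - xs, xs⟫ := by
    rw [key]
    exact Finset.single_le_sum (f := fun j => lam j * c j)
      (fun j _ => mul_nonneg (hlam j) (hc j).le) (Finset.mem_univ i)
  have hci := hc i
  constructor
  · rw [div_mul_eq_mul_div, le_div_iff₀ hci, one_mul] at *
    linarith
  · have h2 : ⟪x₀ - xs, xs⟫ ≤ B * Xs := by
      calc ⟪x₀ - xs, xs⟫ ≤ ‖x₀ - xs‖ * ‖xs‖ := real_inner_le_norm _ _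
        _ ≤ B * Xs := by
          have := norm_nonneg (x₀ - xs); have := norm_nonneg xs
          nlinarith
    rw [le_div_iff₀ hci]
    linarith
end

section
/- Let P be a norm on ℝⁿ with dual norm P*(x) = max_{P(z)≤1} zᵀx. For λ > 0, the dual function d(λ) = min_{x∈ℝⁿ} [‖x₀ − x‖² + λ(P(x) − 1)] admits the closed form d(λ) = −λ + ‖x₀‖² − (λ²/4)·min_{y: P*(y)≤1} ‖y − 2x₀/λ‖². -/
open scoped RealInnerProductSpace

/-- Closed form for the dual function of projection onto a norm ball:
`d(λ) = min_x ‖x₀ − x‖² + λ(P(x) − 1)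
      = −λ + ‖x₀‖² − (λ²/4)·min_{P*(y)≤1} ‖y − 2x₀/λ‖²`. -/
theorem norm_ball_dual_closed_form {n : ℕ}
    (P Pd : EuclideanSpace ℝ (Fin n) → ℝ)
    (hP_nonneg : ∀ x, 0 ≤ P x)
    (hP_homog : ∀ (a : ℝ) (x), P (a • x) = |a| * P x)
    (hP_triangle : ∀ x y, P (x + y) ≤ P x + P y)
    (hP_pos : ∀ x, x ≠ 0 → 0 < P x)
    (hPd : ∀ y, Pd y = sSup ((fun z => ⟪z, y⟫) '' {z | P z ≤ 1}))
    (hP_bidual : ∀ x, P x = sSup ((fun y => ⟪y, x⟫) '' {y | Pd y ≤ 1}))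
    (x₀ : EuclideanSpace ℝ (Fin n)) (lam : ℝ) (hlam : 0 < lam) :
    (⨅ x : EuclideanSpace ℝ (Fin n), ‖x₀ - x‖ ^ 2 + lam * (P x - 1))
      = -lam + ‖x₀‖ ^ 2
        - lam ^ 2 / 4 * sInf ((fun y => ‖y - (2 / lam) • x₀‖ ^ 2) '' {y | Pd y ≤ 1}) := by
  classical
  have hlam' : lam ≠ 0 := ne_of_gt hlam
  have hP0 : P 0 = 0 := by simpa using hP_homog 0 0
  -- upper bound for P : P z ≤ C₂ * ‖z‖
  obtain ⟨C₂, hC₂pos, hC₂⟩ : ∃ C : ℝ, 0 < C ∧ ∀ z, P z ≤ C * ‖z‖ := by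
    refine ⟨(∑ i : Fin n, P (EuclideanSpace.single i (1:ℝ))) + 1, ?_, ?_⟩
    · have : 0 ≤ ∑ i : Fin n, P (EuclideanSpace.single i (1:ℝ)) :=
        Finset.sum_nonneg fun i _ => hP_nonneg _
      linarith
    · intro z
      have hsum : ∀ (s : Finset (Fin n)) (g : Fin n → EuclideanSpace ℝ (Fin n)),
          P (∑ i ∈ s, g i) ≤ ∑ i ∈ s, P (g i) := by
        intro s g
        induction s using Finset.induction with
        | empty => simp [hP0]
        | insert _ _ h ih =>
          rw [Finset.sum_insert h, Finset.sum_insert h]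
          exact le_trans (hP_triangle _ _) (by linarith)
      have hrepr : ∑ i : Fin n, z i • EuclideanSpace.single i (1:ℝ) = z := by
        have := (EuclideanSpace.basisFun (Fin n) ℝ).sum_repr z
        simpa [EuclideanSpace.basisFun_apply, EuclideanSpace.basisFun_repr] using this
      have habs : ∀ i : Fin n, |z i| ≤ ‖z‖ := by
        intro i
        have h1 : ⟪EuclideanSpace.single i (1:ℝ), z⟫ = z i := by
          simp [EuclideanSpace.inner_single_left]
        have h2 := abs_real_inner_le_norm (EuclideanSpace.single i (1:ℝ)) z
        rw [h1, EuclideanSpace.norm_single] at h2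
        simpa using h2
      calc P z = P (∑ i : Fin n, z i • EuclideanSpace.single i (1:ℝ)) := by rw [hrepr]
        _ ≤ ∑ i : Fin n, P (z i • EuclideanSpace.single i (1:ℝ)) := hsum _ _
        _ = ∑ i : Fin n, |z i| * P (EuclideanSpace.single i (1:ℝ)) := by
              simp [hP_homog]
        _ ≤ ∑ i : Fin n, ‖z‖ * P (EuclideanSpace.single i (1:ℝ)) := by
              refine Finset.sum_le_sum fun i _ => ?_
              exact mul_le_mul_of_nonneg_right (habs i) (hP_nonneg _)
        _ = (∑ i : Fin n, P (EuclideanSpace.single i (1:ℝ))) * ‖z‖ := by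
              rw [Finset.sum_mul]
              exact Finset.sum_congr rfl fun i _ => mul_comm _ _
        _ ≤ ((∑ i : Fin n, P (EuclideanSpace.single i (1:ℝ))) + 1) * ‖z‖ := by
              have := norm_nonneg z; nlinarith
  -- P is continuous
  have hPneg : ∀ z, P (-z) = P z := by
    intro z
    have := hP_homog (-1) z
    simpa using this
  have hPcont : Continuous P := by
    have hlip : ∀ a b : EuclideanSpace ℝ (Fin n), P a - P b ≤ C₂ * ‖a - b‖ := by
      intro a b
      have h1 : P a ≤ P b + P (a - b) := by
        have := hP_triangle b (a - b)
        simpa using this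
      have h2 := hC₂ (a - b)
      linarith
    have : LipschitzWith C₂.toNNReal P := by
      refine LipschitzWith.of_dist_le_mul fun a b => ?_
      rw [Real.dist_eq, Real.coe_toNNReal _ hC₂pos.le, dist_eq_norm]
      rcases abs_cases (P a - P b) with ⟨h, _⟩ | ⟨h, _⟩
      · rw [h]; exact hlip a b
      · rw [h]
        have := hlip b a
        rw [norm_sub_rev] at this
        linarith
    exact this.continuous
  -- lower bound for P : ‖z‖ ≤ C₁ * P z
  obtain ⟨C₁, hC₁pos, hC₁⟩ : ∃ C : ℝ, 0 < C ∧ ∀ z, ‖z‖ ≤ C * P z := by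
    rcases subsingleton_or_nontrivial (EuclideanSpace ℝ (Fin n)) with h | h
    · exact ⟨1, one_pos, fun z => by rw [Subsingleton.elim z 0]; simp [hP0]⟩
    · have hsne : (Metric.sphere (0 : EuclideanSpace ℝ (Fin n)) 1).Nonempty :=
        NormedSpace.sphere_nonempty.mpr (by norm_num)
      obtain ⟨z₀, hz₀, hmin⟩ :=
        (isCompact_sphere (0 : EuclideanSpace ℝ (Fin n)) 1).exists_isMinOn hsne
          hPcont.continuousOn
      have hz₀norm : ‖z₀‖ = 1 := by simpa using hz₀
      have hz₀pos : 0 < P z₀ := by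
        refine hP_pos _ fun h => ?_
        rw [h] at hz₀norm; simp at hz₀norm
      refine ⟨(P z₀)⁻¹, inv_pos.mpr hz₀pos, fun z => ?_⟩
      rcases eq_or_ne z 0 with rfl | hz
      · simp [hP0]
      · have hnz : (0:ℝ) < ‖z‖ := norm_pos_iff.mpr hz
        have hmem : ‖z‖⁻¹ • z ∈ Metric.sphere (0 : EuclideanSpace ℝ (Fin n)) 1 := by
          simp [norm_smul, abs_of_pos (inv_pos.mpr hnz), inv_mul_cancel₀ hnz.ne']
        have h1 : P z₀ ≤ P (‖z‖⁻¹ • z) := hmin hmem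
        have h2 : P (‖z‖⁻¹ • z) = ‖z‖⁻¹ * P z := by
          rw [hP_homog, abs_of_pos (inv_pos.mpr hnz)]
        rw [h2] at h1
        have h3 : ‖z‖ * P z₀ ≤ P z := by
          have := mul_le_mul_of_nonneg_left h1 hnz.le
          rwa [mul_inv_cancel_left₀ hnz.ne'] at this
        calc ‖z‖ = (P z₀)⁻¹ * (‖z‖ * P z₀) := by field_simp
          _ ≤ (P z₀)⁻¹ * P z := by
              exact mul_le_mul_of_nonneg_left h3 (inv_pos.mpr hz₀pos).le
  -- facts about the dual norm
  have hball_norm : ∀ z, P z ≤ 1 → ‖z‖ ≤ C₁ := fun z hz =>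
    (hC₁ z).trans (by nlinarith)
  have hSbdd : ∀ y, BddAbove ((fun z => ⟪z, y⟫) '' {z | P z ≤ 1}) := by
    intro y
    refine ⟨C₁ * ‖y‖, ?_⟩
    rintro t ⟨z, hz, rfl⟩
    calc ⟪z, y⟫ ≤ ‖z‖ * ‖y‖ := real_inner_le_norm z y
      _ ≤ C₁ * ‖y‖ := mul_le_mul_of_nonneg_right (hball_norm z hz) (norm_nonneg y)
  have hSne : ∀ y : EuclideanSpace ℝ (Fin n),
      ((fun z => ⟪z, y⟫) '' {z | P z ≤ 1}).Nonempty :=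
    fun y => ⟨⟪(0 : EuclideanSpace ℝ (Fin n)), y⟫, ⟨0, by simp [hP0], rfl⟩⟩
  have hPd_ge : ∀ y z, P z ≤ 1 → ⟪z, y⟫ ≤ Pd y := by
    intro y z hz
    rw [hPd]
    exact le_csSup (hSbdd y) ⟨z, hz, rfl⟩
  have hPd_le : ∀ y (b : ℝ), (∀ z, P z ≤ 1 → ⟪z, y⟫ ≤ b) → Pd y ≤ b := by
    intro y b hb
    rw [hPd]
    refine csSup_le (hSne y) ?_
    rintro t ⟨z, hz, rfl⟩
    exact hb z hz
  set K : Set (EuclideanSpace ℝ (Fin n)) := {y | Pd y ≤ 1} with hK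
  have hK0 : (0 : EuclideanSpace ℝ (Fin n)) ∈ K := by
    show Pd 0 ≤ 1
    refine hPd_le 0 1 fun z _ => ?_
    simp
  have hKbound : ∀ y ∈ K, ‖y‖ ≤ C₂ := by
    intro y hy
    rcases eq_or_ne y 0 with rfl | hy0
    · simp [hC₂pos.le]
    · have hny : (0:ℝ) < ‖y‖ := norm_pos_iff.mpr hy0
      have hz : P ((C₂ * ‖y‖)⁻¹ • y) ≤ 1 := by
        calc P ((C₂ * ‖y‖)⁻¹ • y) ≤ C₂ * ‖(C₂ * ‖y‖)⁻¹ • y‖ := hC₂ _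
          _ = 1 := by
            rw [norm_smul, Real.norm_eq_abs, abs_of_pos (inv_pos.mpr (by positivity))]
            field_simp
      have h1 : ⟪(C₂ * ‖y‖)⁻¹ • y, y⟫ ≤ Pd y := hPd_ge y _ hz
      have h2 : ⟪(C₂ * ‖y‖)⁻¹ • y, y⟫ = ‖y‖ / C₂ := by
        rw [real_inner_smul_left, real_inner_self_eq_norm_sq]
        field_simp
      have h3 : Pd y ≤ 1 := hy
      rw [h2] at h1
      rw [div_le_iff₀ hC₂pos] at h1
      nlinarith
  have hKconv : Convex ℝ K := by
    intro y₁ h₁ y₂ h₂ a b ha hb hab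
    show Pd (a • y₁ + b • y₂) ≤ 1
    refine hPd_le _ 1 fun z hz => ?_
    have e : ⟪z, a • y₁ + b • y₂⟫ = a * ⟪z, y₁⟫ + b * ⟪z, y₂⟫ := by
      rw [inner_add_right, real_inner_smul_right, real_inner_smul_right]
    rw [e]
    have g₁ : ⟪z, y₁⟫ ≤ 1 := (hPd_ge y₁ z hz).trans h₁
    have g₂ : ⟪z, y₂⟫ ≤ 1 := (hPd_ge y₂ z hz).trans h₂
    nlinarith
  have hKclosed : IsClosed K := by
    have hlip : ∀ a b : EuclideanSpace ℝ (Fin n), Pd a - Pd b ≤ C₁ * ‖a - b‖ := by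
      intro a b
      have h1 : Pd a ≤ Pd b + C₁ * ‖a - b‖ := by
        refine hPd_le a _ fun z hz => ?_
        have e : ⟪z, a⟫ = ⟪z, b⟫ + ⟪z, a - b⟫ := by
          rw [← inner_add_right]; congr 1; abel
        rw [e]
        have g1 : ⟪z, b⟫ ≤ Pd b := hPd_ge b z hz
        have g2 : ⟪z, a - b⟫ ≤ ‖z‖ * ‖a - b‖ := real_inner_le_norm _ _
        have g3 : ‖z‖ * ‖a - b‖ ≤ C₁ * ‖a - b‖ :=
          mul_le_mul_of_nonneg_right (hball_norm z hz) (norm_nonneg _)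
        linarith
      linarith
    have hcont : Continuous Pd := by
      have : LipschitzWith C₁.toNNReal Pd := by
        refine LipschitzWith.of_dist_le_mul fun a b => ?_
        rw [Real.dist_eq, Real.coe_toNNReal _ hC₁pos.le, dist_eq_norm]
        rcases abs_cases (Pd a - Pd b) with ⟨h, _⟩ | ⟨h, _⟩
        · rw [h]; exact hlip a b
        · rw [h]
          have := hlip b a
          rw [norm_sub_rev] at this
          linarith
      exact this.continuous
    exact IsClosed.preimage hcont isClosed_Iic
  -- projection of u := (2/lam) • x₀ onto K
  set u : EuclideanSpace ℝ (Fin n) := (2 / lam) • x₀ with hu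
  obtain ⟨ys, hysK, hysproj⟩ :=
    exists_norm_eq_iInf_of_complete_convex ⟨0, hK0⟩ hKclosed.isComplete hKconv u
  have hproj : ∀ y ∈ K, ⟪u - ys, y - ys⟫ ≤ 0 :=
    (norm_eq_iInf_iff_real_inner_le_zero hKconv hysK).mp hysproj
  have hysmin : ∀ y ∈ K, ‖ys - u‖ ^ 2 ≤ ‖y - u‖ ^ 2 := by
    intro y hy
    have h1 : ‖u - ys‖ ≤ ‖u - y‖ := by
      rw [hysproj]
      exact ciInf_le ⟨0, by rintro t ⟨w, rfl⟩; positivity⟩ (⟨y, hy⟩ : K)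
    rw [norm_sub_rev u ys, norm_sub_rev u y] at h1
    exact pow_le_pow_left₀ (norm_nonneg _) h1 2
  -- the minimizer x* of the primal
  set xs : EuclideanSpace ℝ (Fin n) := x₀ - (lam / 2) • ys with hxs
  have hxs_eq : xs = (lam / 2) • (u - ys) := by
    rw [hxs, hu, smul_sub, smul_smul]
    congr 2
    field_simp
    simp
  -- P x ≥ ⟪y, x⟫ for y ∈ K
  have hbidual_bdd : ∀ x : EuclideanSpace ℝ (Fin n),
      BddAbove ((fun y => ⟪y, x⟫) '' K) := by
    intro x
    refine ⟨C₂ * ‖x‖, ?_⟩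
    rintro t ⟨y, hy, rfl⟩
    calc ⟪y, x⟫ ≤ ‖y‖ * ‖x‖ := real_inner_le_norm _ _
      _ ≤ C₂ * ‖x‖ := mul_le_mul_of_nonneg_right (hKbound y hy) (norm_nonneg _)
  have hP_ge_inner : ∀ (x : EuclideanSpace ℝ (Fin n)) (y), y ∈ K → ⟪y, x⟫ ≤ P x := by
    intro x y hy
    rw [hP_bidual]
    exact le_csSup (hbidual_bdd x) ⟨y, hy, rfl⟩
  -- key: P xs = ⟪ys, xs⟫
  have hkey : P xs = ⟪ys, xs⟫ := by
    refine le_antisymm ?_ (hP_ge_inner xs ys hysK)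
    rw [hP_bidual]
    refine csSup_le ⟨⟪(0 : EuclideanSpace ℝ (Fin n)), xs⟫, ⟨0, hK0, rfl⟩⟩ ?_
    rintro t ⟨y, hy, rfl⟩
    have h1 : ⟪u - ys, y - ys⟫ ≤ 0 := hproj y hy
    have h2 : ⟪y - ys, xs⟫ ≤ 0 := by
      rw [hxs_eq, real_inner_smul_right, real_inner_comm]
      nlinarith
    have h3 : ⟪y - ys, xs⟫ = ⟪y, xs⟫ - ⟪ys, xs⟫ := inner_sub_left _ _ _
    linarith
  -- constant value
  have hinner_u : ⟪ys, u⟫ = (2 / lam) * ⟪ys, x₀⟫ := by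
    rw [hu, real_inner_smul_right]
  have hnorm_u : ‖u‖ ^ 2 = (2 / lam) ^ 2 * ‖x₀‖ ^ 2 := by
    rw [hu, norm_smul]
    rw [mul_pow]
    congr 1
    rw [Real.norm_eq_abs, sq_abs]
  have hconst : -lam + ‖x₀‖ ^ 2 - lam ^ 2 / 4 * ‖ys - u‖ ^ 2
      = lam * ⟪ys, x₀⟫ - lam ^ 2 / 4 * ‖ys‖ ^ 2 - lam := by
    have h1 : ‖ys - u‖ ^ 2 = ‖ys‖ ^ 2 - 2 * ⟪ys, u⟫ + ‖u‖ ^ 2 := norm_sub_sq_real ys u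
    rw [h1, hinner_u, hnorm_u]
    field_simp
    ring
  -- weak duality
  have hweak : ∀ x : EuclideanSpace ℝ (Fin n),
      lam * ⟪ys, x₀⟫ - lam ^ 2 / 4 * ‖ys‖ ^ 2 - lam ≤ ‖x₀ - x‖ ^ 2 + lam * (P x - 1) := by
    intro x
    have h1 : ⟪ys, x⟫ ≤ P x := hP_ge_inner x ys hysK
    have h2 : (0:ℝ) ≤ ‖(x₀ - x) - (lam / 2) • ys‖ ^ 2 := sq_nonneg _
    have h3 : ‖(x₀ - x) - (lam / 2) • ys‖ ^ 2
        = ‖x₀ - x‖ ^ 2 - 2 * ((lam / 2) * ⟪x₀ - x, ys⟫) + (lam / 2) ^ 2 * ‖ys‖ ^ 2 := by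
      rw [norm_sub_sq_real, real_inner_smul_right, norm_smul, mul_pow,
        Real.norm_eq_abs, sq_abs]
    have h4 : ⟪x₀ - x, ys⟫ = ⟪ys, x₀⟫ - ⟪ys, x⟫ := by
      rw [real_inner_comm, inner_sub_right]
    rw [h3, h4] at h2
    nlinarith
  -- value at xs
  have hxs_diff : x₀ - xs = (lam / 2) • ys := by
    rw [hxs]; abel
  have hval : ‖x₀ - xs‖ ^ 2 + lam * (P xs - 1)
      = lam * ⟪ys, x₀⟫ - lam ^ 2 / 4 * ‖ys‖ ^ 2 - lam := by
    have h1 : ‖x₀ - xs‖ ^ 2 = (lam / 2) ^ 2 * ‖ys‖ ^ 2 := by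
      rw [hxs_diff, norm_smul, mul_pow, Real.norm_eq_abs, sq_abs]
    have h2 : ⟪ys, xs⟫ = ⟪ys, x₀⟫ - (lam / 2) * ‖ys‖ ^ 2 := by
      rw [hxs, inner_sub_right, real_inner_smul_right, real_inner_self_eq_norm_sq]
    rw [h1, hkey, h2]
    ring
  -- compute the infimum over x
  have hiInf : (⨅ x : EuclideanSpace ℝ (Fin n), ‖x₀ - x‖ ^ 2 + lam * (P x - 1))
      = lam * ⟪ys, x₀⟫ - lam ^ 2 / 4 * ‖ys‖ ^ 2 - lam := by
    refine le_antisymm ?_ (le_ciInf hweak)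
    calc (⨅ x : EuclideanSpace ℝ (Fin n), ‖x₀ - x‖ ^ 2 + lam * (P x - 1))
        ≤ ‖x₀ - xs‖ ^ 2 + lam * (P xs - 1) :=
          ciInf_le ⟨lam * ⟪ys, x₀⟫ - lam ^ 2 / 4 * ‖ys‖ ^ 2 - lam, by
            rintro t ⟨x, rfl⟩; exact hweak x⟩ xs
      _ = _ := hval
  -- compute the infimum over y
  have hsInf : sInf ((fun y => ‖y - (2 / lam) • x₀‖ ^ 2) '' K) = ‖ys - u‖ ^ 2 := by
    refine le_antisymm (csInf_le ⟨0, ?_⟩ ⟨ys, hysK, rfl⟩) ?_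
    · rintro t ⟨y, _, rfl⟩; positivity
    · refine le_csInf ⟨‖ys - u‖ ^ 2, ⟨ys, hysK, rfl⟩⟩ ?_
      rintro t ⟨y, hy, rfl⟩
      exact hysmin y hy
  rw [hiInf, hsInf, hconst]
end
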